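/- With the notation of the classification of infinitesimal symplectomorphisms of (ΛⁿT*ℝ^{n+k}, Ω): the Lie brackets satisfy [χ₁, χ₂] = 0 for any two vertical symplectomorphisms χ₁, χ₂ with q-dependent coefficients; [ξ̄₁, ξ̄₂] = \overline{[ξ₁, ξ₂]} for lifts of vector fields ξ₁, ξ₂ on ℝ^{n+k}; and [ξ̄, χ] is again a vertical field of the form Σ ψ_{β₁⋯βₙ}(q) ∂/∂p_{β₁⋯βₙ} with ψ_{β₁⋯βₙ} = Σ_α (ξ^α ∂χ_{β₁⋯βₙ}/∂q^α + Σ_μ χ_{β₁⋯β_{μ−1}αβ_{μ+1}⋯βₙ} ∂ξ^α/∂q^{β_μ}). Hence the Lie algebra of infinitesimal symplectomorphisms is the semidirect product sp_P ⋉ sp_Q, with sp_Q an abelian ideal. -/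

import Mathlib

open scoped BigOperators

namespace Stmt10

set_option maxHeartbeats 2000000
set_option synthInstance.maxHeartbeats 1000000

/-- Continuous alternating `k`-forms on `E`. -/
noncomputable def altSub (k : ℕ) (E : Type*) [NormedAddCommGroup E] [NormedSpace ℝ E] :
    Submodule ℝ (ContinuousMultilinearMap ℝ (fun _ : Fin k => E) ℝ) where
  carrier := {f | ∀ (v : Fin k → E) (i j : Fin k), i ≠ j → v i = v j → f v = 0}
  add_mem' := by
    intro f g hf hg v i j hij hv
    simp [hf v i j hij hv, hg v i j hij hv]
  zero_mem' := by intro v i j hij hv; simp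
  smul_mem' := by
    intro c f hf v i j hij hv
    simp [hf v i j hij hv]

variable {E : Type*} [NormedAddCommGroup E] [NormedSpace ℝ E]

/-- The phase space `M = N × ΛⁿT*N` (the paper's `n` is `n+1` here). -/
abbrev Phase (n : ℕ) (E : Type*) [NormedAddCommGroup E] [NormedSpace ℝ E] : Type _ :=
  E × altSub (n + 1) E

/-- The multisymplectic form `Ω = dθ`. -/
noncomputable def OmegaLD (n : ℕ) (w : Fin (n + 2) → Phase n E) : ℝ :=
  ∑ i : Fin (n + 2),
    (-1 : ℝ) ^ (i : ℕ) *
      ((w i).2 : ContinuousMultilinearMap ℝ (fun _ : Fin (n + 1) => E) ℝ)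
        (fun j => (w (i.succAbove j)).1)

/-- The exterior derivative of an unbundled `k`-form. -/
noncomputable def extDeriv {F : Type*} [NormedAddCommGroup F] [NormedSpace ℝ F] {k : ℕ}
    (ω : F → (Fin k → F) → ℝ) (x : F) (v : Fin (k + 1) → F) : ℝ :=
  ∑ i : Fin (k + 1), (-1 : ℝ) ^ (i : ℕ) * fderiv ℝ (fun y => ω y (v ∘ i.succAbove)) x (v i)

/-- The Lie bracket of vector fields on a normed space. -/
noncomputable def lieBra {F : Type*} [NormedAddCommGroup F] [NormedSpace ℝ F]
    (f g : F → F) (x : F) : F :=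
  fderiv ℝ g x (f x) - fderiv ℝ f x (g x)

/-- The infinitesimal action `∑ⱼ p(v₁,…,Lvⱼ,…)` of a linear map on alternating forms. -/
noncomputable def liftActionAlt (n : ℕ) (L : E →L[ℝ] E) (p : altSub (n + 1) E) :
    altSub (n + 1) E :=
  fderiv ℝ
    (fun t : ℝ =>
      (⟨(p : ContinuousMultilinearMap ℝ (fun _ : Fin (n + 1) => E) ℝ).compContinuousLinearMap
          (fun _ => ContinuousLinearMap.id ℝ E + t • L),
        fun v i j hij hv => by
          have := p.2 (fun l => (ContinuousLinearMap.id ℝ E + t • L) (v l)) i j hij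
            (by simp [hv])
          simpa using this⟩ : altSub (n + 1) E)) 0 1

/-- The canonical lift `ξ̄` of a base vector field `ξ` to `ΛⁿT*N`. -/
noncomputable def xibar (n : ℕ) (ξ : E → E) (m : Phase n E) : Phase n E :=
  (ξ m.1, -liftActionAlt n (fderiv ℝ ξ m.1) m.2)

/-- The vertical field associated with `q`-dependent fiber coefficients `χ`. -/
def chiVF (n : ℕ) (χ : E → altSub (n + 1) E) (m : Phase n E) : Phase n E :=
  ((0 : E), χ m.1)


lemma hasFDerivAt_codRestrict {F G : Type*} [NormedAddCommGroup F] [NormedSpace ℝ F]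
    [NormedAddCommGroup G] [NormedSpace ℝ G] {S : Submodule ℝ G} {f : F → S} {D : F →L[ℝ] G}
    {x : F} (hD : ∀ w, D w ∈ S) (h : HasFDerivAt (fun y => (f y : G)) D x) :
    HasFDerivAt f (D.codRestrict S hD) x := by
  rw [hasFDerivAt_iff_isLittleO_nhds_zero] at h ⊢
  rw [← Asymptotics.isLittleO_norm_left] at h ⊢
  have heq : (fun h' : F => ‖f (x + h') - f x - (D.codRestrict S hD) h'‖)
      = fun h' : F => ‖(f (x + h') : G) - (f x : G) - D h'‖ := by
    funext h'
    rw [Submodule.coe_norm]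
    congr 1
  rw [heq]
  exact h


lemma alt_swap {k : ℕ} {p : ContinuousMultilinearMap ℝ (fun _ : Fin k => E) ℝ}
    (hp : p ∈ altSub k E) (v : Fin k → E) {i j : Fin k} (hij : i ≠ j) (x y : E) :
    p (Function.update (Function.update v i x) j y)
      = - p (Function.update (Function.update v i y) j x) := by
  set q : E → E → ℝ := fun a b => p (Function.update (Function.update v i a) j b) with hq
  have h0 : ∀ z : E, q z z = 0 := by
    intro z
    refine hp _ i j hij ?_
    rw [Function.update_self, Function.update_of_ne hij, Function.update_self]
  have hq1 : ∀ a b c : E, q (a + b) c = q a c + q b c := by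
    intro a b c
    simp only [hq]
    rw [Function.update_comm hij, p.map_update_add, ← Function.update_comm hij,
      ← Function.update_comm hij]
  have hq2 : ∀ a b c : E, q a (b + c) = q a b + q a c := by
    intro a b c
    simp only [hq]
    exact p.map_update_add _ j b c
  have key := h0 (x + y)
  rw [hq1, hq2, hq2] at key
  have hx := h0 x
  have hy := h0 y
  show q x y = - q y x
  linarith

noncomputable def Aexp (n : ℕ) (L : E →L[ℝ] E)
    (p : ContinuousMultilinearMap ℝ (fun _ : Fin (n+1) => E) ℝ) :
    ContinuousMultilinearMap ℝ (fun _ : Fin (n+1) => E) ℝ :=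
  ∑ j : Fin (n+1), p.compContinuousLinearMap
    (Function.update (fun _ => ContinuousLinearMap.id ℝ E) j L)

lemma Aexp_apply (n : ℕ) (L : E →L[ℝ] E)
    (p : ContinuousMultilinearMap ℝ (fun _ : Fin (n+1) => E) ℝ) (v : Fin (n+1) → E) :
    Aexp n L p v = ∑ j : Fin (n+1), p (Function.update v j (L (v j))) := by
  rw [Aexp, ContinuousMultilinearMap.sum_apply]
  refine Finset.sum_congr rfl fun j _ => ?_
  rw [ContinuousMultilinearMap.compContinuousLinearMap_apply]
  congr 1
  funext i
  rcases eq_or_ne i j with rfl | h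
  · simp
  · simp [Function.update_of_ne h]

lemma Aexp_mem (n : ℕ) (L : E →L[ℝ] E)
    {p : ContinuousMultilinearMap ℝ (fun _ : Fin (n+1) => E) ℝ} (hp : p ∈ altSub (n+1) E) :
    Aexp n L p ∈ altSub (n+1) E := by
  intro v i j hij hv
  rw [Aexp_apply]
  have hrest : ∀ k ∈ Finset.univ, k ∉ ({i, j} : Finset (Fin (n+1))) →
      p (Function.update v k (L (v k))) = 0 := by
    intro k _ hk
    simp only [Finset.mem_insert, Finset.mem_singleton, not_or] at hk
    refine hp _ i j hij ?_
    rw [Function.update_of_ne (Ne.symm hk.1), Function.update_of_ne (Ne.symm hk.2)]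
    exact hv
  rw [← Finset.sum_subset (Finset.subset_univ ({i, j} : Finset (Fin (n+1)))) hrest,
    Finset.sum_pair hij]
  have e1 : Function.update v i (L (v i))
      = Function.update (Function.update v i (L (v i))) j (v i) := by
    funext k
    rcases eq_or_ne k j with rfl | hk
    · rw [Function.update_self, Function.update_of_ne (Ne.symm hij)]
      exact hv.symm
    · rw [Function.update_of_ne hk]
  have e2 : Function.update v j (L (v j))
      = Function.update (Function.update v i (v i)) j (L (v i)) := by
    rw [Function.update_eq_self, hv]
  rw [e1, e2, alt_swap hp v hij (L (v i)) (v i)]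
  ring

lemma Aexp_add_left (n : ℕ) (L₁ L₂ : E →L[ℝ] E)
    (p : ContinuousMultilinearMap ℝ (fun _ : Fin (n+1) => E) ℝ) :
    Aexp n (L₁ + L₂) p = Aexp n L₁ p + Aexp n L₂ p := by
  ext v
  simp only [ContinuousMultilinearMap.add_apply, Aexp_apply, ContinuousLinearMap.add_apply,
    p.map_update_add, Finset.sum_add_distrib]

lemma Aexp_sub_left (n : ℕ) (L₁ L₂ : E →L[ℝ] E)
    (p : ContinuousMultilinearMap ℝ (fun _ : Fin (n+1) => E) ℝ) :
    Aexp n (L₁ - L₂) p = Aexp n L₁ p - Aexp n L₂ p := by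
  ext v
  simp only [ContinuousMultilinearMap.sub_apply, Aexp_apply, ContinuousLinearMap.sub_apply,
    p.map_update_sub, Finset.sum_sub_distrib]

lemma Aexp_comm (n : ℕ) (L M : E →L[ℝ] E)
    (p : ContinuousMultilinearMap ℝ (fun _ : Fin (n+1) => E) ℝ) :
    Aexp n M (Aexp n L p) - Aexp n L (Aexp n M p) = Aexp n (L.comp M - M.comp L) p := by
  ext v
  simp only [ContinuousMultilinearMap.sub_apply, Aexp_apply]
  have swap : (∑ k : Fin (n+1), ∑ j : Fin (n+1),
        p (Function.update (Function.update v k (L (v k))) j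
          (M ((Function.update v k (L (v k))) j))))
      = ∑ k : Fin (n+1), ∑ j : Fin (n+1),
        p (Function.update (Function.update v j (L (v j))) k
          (M ((Function.update v j (L (v j))) k))) := Finset.sum_comm
  rw [swap, ← Finset.sum_sub_distrib]
  refine Finset.sum_congr rfl fun k _ => ?_
  rw [← Finset.sum_sub_distrib]
  rw [Fintype.sum_eq_single k (fun j hjk => ?_)]
  · rw [Function.update_self, Function.update_idem, Function.update_self,
      Function.update_idem, p.map_update_sub,
      ContinuousLinearMap.comp_apply, ContinuousLinearMap.comp_apply]
  · rw [Function.update_of_ne hjk, Function.update_of_ne (Ne.symm hjk),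
      Function.update_comm (Ne.symm hjk), sub_self]



set_option maxHeartbeats 1000000 in
lemma liftActionAlt_eq (n : ℕ) (L : E →L[ℝ] E) (p : altSub (n+1) E) :
    liftActionAlt n L p
      = ⟨Aexp n L (p : ContinuousMultilinearMap ℝ (fun _ : Fin (n+1) => E) ℝ),
          Aexp_mem n L p.2⟩ := by
  classical
  set c : Fin (n+1) → (E →L[ℝ] E) := fun _ => ContinuousLinearMap.id ℝ E with hc
  set Φ := ContinuousMultilinearMap.compContinuousLinearMapContinuousMultilinear ℝ
    (fun _ : Fin (n+1) => E) (fun _ : Fin (n+1) => E) ℝ with hΦ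
  have hΦapp : ∀ (f : Fin (n+1) → (E →L[ℝ] E))
      (q : ContinuousMultilinearMap ℝ (fun _ : Fin (n+1) => E) ℝ),
      Φ f q = q.compContinuousLinearMap f := by
    intro f q
    rw [hΦ, ContinuousMultilinearMap.compContinuousLinearMapContinuousMultilinear,
      MultilinearMap.coe_mkContinuous]
    rfl
  have hι : HasDerivAt (fun t : ℝ => (fun _ : Fin (n+1) => ContinuousLinearMap.id ℝ E + t • L))
      (fun _ : Fin (n+1) => L) 0 := by
    rw [hasDerivAt_pi]
    intro i
    simpa using ((hasDerivAt_id (0:ℝ)).smul_const L).const_add (ContinuousLinearMap.id ℝ E)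
  have hc0 : (fun _ : Fin (n+1) => ContinuousLinearMap.id ℝ E + (0:ℝ) • L) = c := by
    funext i; simp [hc]
  have hΦd : HasFDerivAt Φ
      (Φ.linearDeriv (fun _ : Fin (n+1) => ContinuousLinearMap.id ℝ E + (0:ℝ) • L))
      (fun _ : Fin (n+1) => ContinuousLinearMap.id ℝ E + (0:ℝ) • L) :=
    ContinuousMultilinearMap.hasFDerivAt (𝕜 := ℝ)
      (F := ContinuousMultilinearMap ℝ (fun _ : Fin (n+1) => E) ℝ →L[ℝ]
        ContinuousMultilinearMap ℝ (fun _ : Fin (n+1) => E) ℝ) _ _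
  have hcomp : HasDerivAt (fun t : ℝ => Φ (fun _ => ContinuousLinearMap.id ℝ E + t • L))
      (Φ.linearDeriv (fun _ : Fin (n+1) => ContinuousLinearMap.id ℝ E + (0:ℝ) • L)
        (fun _ => L)) 0 := hΦd.comp_hasDerivAt (E := ContinuousMultilinearMap ℝ (fun _ : Fin (n+1) => E) ℝ →L[ℝ]
        ContinuousMultilinearMap ℝ (fun _ : Fin (n+1) => E) ℝ) 0 hι
  have happ0 := hcomp.clm_apply (hasDerivAt_const (0:ℝ)
    (p : ContinuousMultilinearMap ℝ (fun _ : Fin (n+1) => E) ℝ))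
  have hfun : (fun t : ℝ => Φ (fun _ => ContinuousLinearMap.id ℝ E + t • L)
        (p : ContinuousMultilinearMap ℝ (fun _ : Fin (n+1) => E) ℝ))
      = fun t : ℝ =>
          (p : ContinuousMultilinearMap ℝ (fun _ : Fin (n+1) => E) ℝ).compContinuousLinearMap
            (fun _ => ContinuousLinearMap.id ℝ E + t • L) :=
    funext fun t => hΦapp _ _
  have hval : (Φ.linearDeriv (fun _ : Fin (n+1) => ContinuousLinearMap.id ℝ E + (0:ℝ) • L)
        (fun _ => L)) (p : ContinuousMultilinearMap ℝ (fun _ : Fin (n+1) => E) ℝ)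
        + (Φ (fun _ : Fin (n+1) => ContinuousLinearMap.id ℝ E + (0:ℝ) • L)) 0
      = Aexp n L (p : ContinuousMultilinearMap ℝ (fun _ : Fin (n+1) => E) ℝ) := by
    simp only [map_zero, add_zero, ContinuousMultilinearMap.linearDeriv_apply,
      ContinuousLinearMap.sum_apply]
    rw [Aexp]
    refine Finset.sum_congr rfl fun j _ => ?_
    rw [hΦapp]
    simp only [hc0]
    rfl
  rw [hfun, hval] at happ0
  have hF : HasFDerivAt
      (fun t : ℝ =>
        (p : ContinuousMultilinearMap ℝ (fun _ : Fin (n+1) => E) ℝ).compContinuousLinearMap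
          (fun _ => ContinuousLinearMap.id ℝ E + t • L))
      (ContinuousLinearMap.smulRight (1 : ℝ →L[ℝ] ℝ)
        (Aexp n L (p : ContinuousMultilinearMap ℝ (fun _ : Fin (n+1) => E) ℝ))) 0 :=
    hasDerivAt_iff_hasFDerivAt.1 happ0
  have hmem : ∀ w : ℝ, (ContinuousLinearMap.smulRight (1 : ℝ →L[ℝ] ℝ)
      (Aexp n L (p : ContinuousMultilinearMap ℝ (fun _ : Fin (n+1) => E) ℝ))) w
        ∈ altSub (n+1) E := by
    intro w
    simp only [ContinuousLinearMap.smulRight_apply, ContinuousLinearMap.one_apply]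
    exact Submodule.smul_mem _ _ (Aexp_mem n L p.2)
  have hFd := hasFDerivAt_codRestrict (f := fun t : ℝ =>
      (⟨(p : ContinuousMultilinearMap ℝ (fun _ : Fin (n + 1) => E) ℝ).compContinuousLinearMap
          (fun _ => ContinuousLinearMap.id ℝ E + t • L),
        fun v i j hij hv => by
          have := p.2 (fun l => (ContinuousLinearMap.id ℝ E + t • L) (v l)) i j hij
            (by simp [hv])
          simpa using this⟩ : altSub (n + 1) E)) hmem hF
  rw [liftActionAlt, hFd.fderiv]
  refine Subtype.ext ?_
  simp


lemma Phi_apply (n : ℕ) (f : Fin (n+1) → (E →L[ℝ] E))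
    (q : ContinuousMultilinearMap ℝ (fun _ : Fin (n+1) => E) ℝ) :
    ContinuousMultilinearMap.compContinuousLinearMapContinuousMultilinear ℝ
      (fun _ : Fin (n+1) => E) (fun _ : Fin (n+1) => E) ℝ f q
      = q.compContinuousLinearMap f := by
  rw [ContinuousMultilinearMap.compContinuousLinearMapContinuousMultilinear,
    MultilinearMap.coe_mkContinuous]
  rfl

lemma Aexp_zero_left (n : ℕ)
    (p : ContinuousMultilinearMap ℝ (fun _ : Fin (n+1) => E) ℝ) :
    Aexp n (0 : E →L[ℝ] E) p = 0 := by
  ext v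
  simp only [Aexp_apply, ContinuousLinearMap.zero_apply, ContinuousMultilinearMap.zero_apply]
  exact Finset.sum_eq_zero fun j _ => p.toMultilinearMap.map_update_zero v j

lemma Aexp_neg_right (n : ℕ) (L : E →L[ℝ] E)
    (p : ContinuousMultilinearMap ℝ (fun _ : Fin (n+1) => E) ℝ) :
    Aexp n L (-p) = -(Aexp n L p) := by
  ext v
  simp [Aexp_apply]

lemma fderiv_chiVF_apply (n : ℕ) (χ : E → altSub (n+1) E) (hχ : ContDiff ℝ (⊤ : ℕ∞) χ)
    (m w : Phase n E) :
    fderiv ℝ (chiVF n χ) m w = ((0 : E), fderiv ℝ χ m.1 w.1) := by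
  have h : HasFDerivAt (chiVF n χ)
      ((0 : Phase n E →L[ℝ] E).prod
        ((fderiv ℝ χ m.1).comp (ContinuousLinearMap.fst ℝ E (altSub (n+1) E)))) m :=
    (hasFDerivAt_const (0 : E) m).prodMk
      (((hχ.differentiable (by simp) m.1).hasFDerivAt).comp m hasFDerivAt_fst)
  rw [h.fderiv]
  simp


lemma Aexp_smul_left (n : ℕ) (c : ℝ) (L : E →L[ℝ] E)
    (p : ContinuousMultilinearMap ℝ (fun _ : Fin (n+1) => E) ℝ) :
    Aexp n (c • L) p = c • Aexp n L p := by
  ext v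
  simp only [Aexp_apply, ContinuousMultilinearMap.smul_apply, ContinuousLinearMap.smul_apply,
    ContinuousMultilinearMap.map_update_smul, Finset.smul_sum]

lemma Aexp_add_right (n : ℕ) (L : E →L[ℝ] E)
    (p q : ContinuousMultilinearMap ℝ (fun _ : Fin (n+1) => E) ℝ) :
    Aexp n L (p + q) = Aexp n L p + Aexp n L q := by
  ext v
  simp only [Aexp_apply, ContinuousMultilinearMap.add_apply, Finset.sum_add_distrib]

lemma Aexp_smul_right (n : ℕ) (c : ℝ) (L : E →L[ℝ] E)
    (p : ContinuousMultilinearMap ℝ (fun _ : Fin (n+1) => E) ℝ) :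
    Aexp n L (c • p) = c • Aexp n L p := by
  ext v
  simp only [Aexp_apply, ContinuousMultilinearMap.smul_apply, Finset.smul_sum]

lemma Aexp_norm_le (n : ℕ) (L : E →L[ℝ] E)
    (p : ContinuousMultilinearMap ℝ (fun _ : Fin (n+1) => E) ℝ) :
    ‖Aexp n L p‖ ≤ ((n : ℝ) + 1) * ‖L‖ * ‖p‖ := by
  refine (norm_sum_le _ _).trans ?_
  have hterm : ∀ j : Fin (n+1),
      ‖p.compContinuousLinearMap (Function.update (fun _ => ContinuousLinearMap.id ℝ E) j L)‖
        ≤ ‖p‖ * ‖L‖ := by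
    intro j
    refine (p.norm_compContinuousLinearMap_le _).trans ?_
    refine mul_le_mul_of_nonneg_left ?_ (norm_nonneg p)
    have hprod : (∏ i : Fin (n+1), ‖Function.update (fun _ => ContinuousLinearMap.id ℝ E) j L i‖)
        = ∏ i : Fin (n+1),
            (Function.update (fun _ : Fin (n+1) => ‖ContinuousLinearMap.id ℝ E‖) j ‖L‖) i := by
      refine Finset.prod_congr rfl fun i _ => ?_
      rcases eq_or_ne i j with rfl | h
      · simp
      · simp [Function.update_of_ne h]
    rw [hprod, Finset.prod_update_of_mem (Finset.mem_univ j)]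
    calc ‖L‖ * ∏ _i ∈ Finset.univ \ {j}, ‖ContinuousLinearMap.id ℝ E‖
        ≤ ‖L‖ * 1 := by
          refine mul_le_mul_of_nonneg_left ?_ (norm_nonneg L)
          exact Finset.prod_le_one (fun _ _ => norm_nonneg _)
            (fun _ _ => ContinuousLinearMap.norm_id_le)
      _ = ‖L‖ := mul_one _
  calc (∑ j : Fin (n+1),
        ‖p.compContinuousLinearMap (Function.update (fun _ => ContinuousLinearMap.id ℝ E) j L)‖)
      ≤ ∑ _j : Fin (n+1), ‖p‖ * ‖L‖ := Finset.sum_le_sum fun j _ => hterm j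
    _ = ((n : ℝ) + 1) * ‖L‖ * ‖p‖ := by
        rw [Finset.sum_const, Finset.card_univ, Fintype.card_fin]
        push_cast
        ring

lemma isBBM_Aexp (n : ℕ) :
    IsBoundedBilinearMap ℝ (fun z : (E →L[ℝ] E) ×
      ContinuousMultilinearMap ℝ (fun _ : Fin (n+1) => E) ℝ => Aexp n z.1 z.2) where
  add_left L₁ L₂ p := Aexp_add_left n L₁ L₂ p
  smul_left c L p := Aexp_smul_left n c L p
  add_right L p q := Aexp_add_right n L p q
  smul_right c L p := Aexp_smul_right n c L p
  bound := ⟨(n : ℝ) + 1, by positivity, fun L p => Aexp_norm_le n L p⟩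

set_option maxHeartbeats 2000000 in
lemma fderiv_xibar_apply (n : ℕ) (ξ : E → E) (hξ : ContDiff ℝ (⊤ : ℕ∞) ξ) (m w : Phase n E) :
    fderiv ℝ (xibar n ξ) m w
      = (fderiv ℝ ξ m.1 w.1,
        ⟨-(Aexp n (fderiv ℝ ξ m.1)
              (w.2 : ContinuousMultilinearMap ℝ (fun _ : Fin (n+1) => E) ℝ))
            - Aexp n (fderiv ℝ (fderiv ℝ ξ) m.1 w.1)
              (m.2 : ContinuousMultilinearMap ℝ (fun _ : Fin (n+1) => E) ℝ),
          sub_mem (neg_mem (Aexp_mem n _ w.2.2)) (Aexp_mem n _ m.2.2)⟩) := by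
  have heq : xibar n ξ = fun u : Phase n E =>
      (ξ u.1,
        (⟨-(Aexp n (fderiv ℝ ξ u.1)
            ((u.2 : ContinuousMultilinearMap ℝ (fun _ : Fin (n+1) => E) ℝ))),
          neg_mem (Aexp_mem n _ u.2.2)⟩ : altSub (n+1) E)) := by
    funext u
    rw [xibar, liftActionAlt_eq]
    exact Prod.ext rfl (Subtype.ext rfl)
  have hd2 : HasFDerivAt (fderiv ℝ ξ) (fderiv ℝ (fderiv ℝ ξ) m.1) m.1 :=
    (((hξ.fderiv_right (m := (⊤ : ℕ∞)) (by simp)).differentiable (by simp)) m.1).hasFDerivAt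
  have hdξ1 : HasFDerivAt (fun u : Phase n E => fderiv ℝ ξ u.1)
      ((fderiv ℝ (fderiv ℝ ξ) m.1).comp (ContinuousLinearMap.fst ℝ E (altSub (n+1) E))) m :=
    hd2.comp (G := E →L[ℝ] E) m (hasFDerivAt_fst (𝕜 := ℝ) (E := E) (F := altSub (n+1) E) (p := m))
  have hu : HasFDerivAt
      (fun u : Phase n E => (u.2 : ContinuousMultilinearMap ℝ (fun _ : Fin (n+1) => E) ℝ))
      ((altSub (n+1) E).subtypeL.comp (ContinuousLinearMap.snd ℝ E (altSub (n+1) E))) m :=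
    ((altSub (n+1) E).subtypeL.comp (ContinuousLinearMap.snd ℝ E (altSub (n+1) E))).hasFDerivAt
      (E := Phase n E) (F := ContinuousMultilinearMap ℝ (fun _ : Fin (n+1) => E) ℝ) (x := m)
  have hpr : HasFDerivAt (fun u : Phase n E => (fderiv ℝ ξ u.1,
        (u.2 : ContinuousMultilinearMap ℝ (fun _ : Fin (n+1) => E) ℝ)))
      (((fderiv ℝ (fderiv ℝ ξ) m.1).comp (ContinuousLinearMap.fst ℝ E (altSub (n+1) E))).prod
        ((altSub (n+1) E).subtypeL.comp (ContinuousLinearMap.snd ℝ E (altSub (n+1) E)))) m :=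
    HasFDerivAt.prodMk (𝕜 := ℝ) (E := Phase n E) (F := E →L[ℝ] E)
      (G := ContinuousMultilinearMap ℝ (fun _ : Fin (n+1) => E) ℝ) hdξ1 hu
  have hbb : HasFDerivAt (fun z : (E →L[ℝ] E) ×
        ContinuousMultilinearMap ℝ (fun _ : Fin (n+1) => E) ℝ => Aexp n z.1 z.2)
      ((isBBM_Aexp (E := E) n).deriv (fderiv ℝ ξ m.1,
        (m.2 : ContinuousMultilinearMap ℝ (fun _ : Fin (n+1) => E) ℝ)))
      (fderiv ℝ ξ m.1, (m.2 : ContinuousMultilinearMap ℝ (fun _ : Fin (n+1) => E) ℝ)) :=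
    (isBBM_Aexp (E := E) n).hasFDerivAt _
  have hamb := (HasFDerivAt.comp (𝕜 := ℝ) (E := Phase n E)
    (F := (E →L[ℝ] E) × ContinuousMultilinearMap ℝ (fun _ : Fin (n+1) => E) ℝ)
    (G := ContinuousMultilinearMap ℝ (fun _ : Fin (n+1) => E) ℝ) m hbb hpr).neg
  letI : Neg (Phase n E →L[ℝ] ContinuousMultilinearMap ℝ (fun _ : Fin (n+1) => E) ℝ) :=
    (ContinuousLinearMap.toNormedAddCommGroup (𝕜 := ℝ) (𝕜₂ := ℝ) (σ₁₂ := RingHom.id ℝ) (E := Phase n E) (F := ContinuousMultilinearMap ℝ (fun _ : Fin (n+1) => E) ℝ)).toNeg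
  have hmem : ∀ u : Phase n E,
      (-(((isBBM_Aexp (E := E) n).deriv (fderiv ℝ ξ m.1,
            (m.2 : ContinuousMultilinearMap ℝ (fun _ : Fin (n+1) => E) ℝ))).comp
          (((fderiv ℝ (fderiv ℝ ξ) m.1).comp
              (ContinuousLinearMap.fst ℝ E (altSub (n+1) E))).prod
            ((altSub (n+1) E).subtypeL.comp (ContinuousLinearMap.snd ℝ E (altSub (n+1) E)))))) u
        ∈ altSub (n+1) E := by
    intro u
    exact neg_mem (add_mem (Aexp_mem n _ u.2.2) (Aexp_mem n _ m.2.2))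
  have hsnd := hasFDerivAt_codRestrict (f := fun u : Phase n E =>
      (⟨-(Aexp n (fderiv ℝ ξ u.1)
          ((u.2 : ContinuousMultilinearMap ℝ (fun _ : Fin (n+1) => E) ℝ))),
        neg_mem (Aexp_mem n _ u.2.2)⟩ : altSub (n+1) E)) hmem hamb
  have hfst : HasFDerivAt (fun u : Phase n E => ξ u.1)
      ((fderiv ℝ ξ m.1).comp (ContinuousLinearMap.fst ℝ E (altSub (n+1) E))) m :=
    ((hξ.differentiable (by simp) m.1).hasFDerivAt).comp m
      (hasFDerivAt_fst (𝕜 := ℝ) (E := E) (F := altSub (n+1) E) (p := m))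
  have hx : HasFDerivAt (fun u : Phase n E =>
      (ξ u.1,
        (⟨-(Aexp n (fderiv ℝ ξ u.1)
            ((u.2 : ContinuousMultilinearMap ℝ (fun _ : Fin (n+1) => E) ℝ))),
          neg_mem (Aexp_mem n _ u.2.2)⟩ : altSub (n+1) E))) _ m :=
    HasFDerivAt.prodMk (𝕜 := ℝ) (E := Phase n E) (F := E) (G := altSub (n+1) E) hfst hsnd
  rw [heq, hx.fderiv]
  refine Prod.ext rfl (Subtype.ext ?_)
  simp only [ContinuousLinearMap.prod_apply, ContinuousLinearMap.coe_codRestrict_apply,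
    ContinuousLinearMap.neg_apply, ContinuousLinearMap.comp_apply,
    ContinuousLinearMap.coe_fst', ContinuousLinearMap.coe_snd',
    Submodule.subtypeL_apply, IsBoundedBilinearMap.deriv_apply]
  simp only [ContinuousLinearMap.coe_mk']
  erw [LinearMap.neg_apply, ContinuousLinearMap.coe_coe]
  simp only [ContinuousLinearMap.comp_apply, ContinuousLinearMap.prod_apply,
    ContinuousLinearMap.coe_fst', ContinuousLinearMap.coe_snd', Submodule.subtypeL_apply,
    IsBoundedBilinearMap.deriv_apply, neg_add]
  abel


lemma xibar_snd_coe (n : ℕ) (ζ : E → E) (m : Phase n E) :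
    ((xibar n ζ m).2 : ContinuousMultilinearMap ℝ (fun _ : Fin (n+1) => E) ℝ)
      = -(Aexp n (fderiv ℝ ζ m.1)
          (m.2 : ContinuousMultilinearMap ℝ (fun _ : Fin (n+1) => E) ℝ)) := by
  show ((-(liftActionAlt n (fderiv ℝ ζ m.1) m.2) : altSub (n+1) E)
      : ContinuousMultilinearMap ℝ (fun _ : Fin (n+1) => E) ℝ) = _
  rw [liftActionAlt_eq]
  rfl

/-- Lie bracket relations among infinitesimal symplectomorphisms of
`(ΛⁿT*N, Ω)`: `[χ₁,χ₂] = 0`, `[ξ̄₁,ξ̄₂] = \overline{[ξ₁,ξ₂]}`, and `[ξ̄,χ]` is again a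
vertical field, with coefficients `ψ = D_ξ χ + (∂ξ)·χ`.  Hence the infinitesimal
symplectomorphisms form the semidirect product `sp_P ⋉ sp_Q` with `sp_Q` an abelian
ideal. -/
theorem stmt10 (n : ℕ) {E : Type*} [NormedAddCommGroup E] [NormedSpace ℝ E]
    (ξ ξ₁ ξ₂ : E → E) (hξ : ContDiff ℝ (⊤ : ℕ∞) ξ) (hξ₁ : ContDiff ℝ (⊤ : ℕ∞) ξ₁) (hξ₂ : ContDiff ℝ (⊤ : ℕ∞) ξ₂)
    (χ χ₁ χ₂ : E → altSub (n + 1) E)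
    (hχ : ContDiff ℝ (⊤ : ℕ∞) χ) (hχ₁ : ContDiff ℝ (⊤ : ℕ∞) χ₁) (hχ₂ : ContDiff ℝ (⊤ : ℕ∞) χ₂)
    (hχcl : ∀ (x : Phase n E) (v : Fin (n + 2) → Phase n E),
      extDeriv (fun y (w : Fin (n + 1) → Phase n E) =>
        OmegaLD n (Fin.cons (chiVF n χ y) w)) x v = 0)
    (hχ₁cl : ∀ (x : Phase n E) (v : Fin (n + 2) → Phase n E),
      extDeriv (fun y (w : Fin (n + 1) → Phase n E) =>
        OmegaLD n (Fin.cons (chiVF n χ₁ y) w)) x v = 0)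
    (hχ₂cl : ∀ (x : Phase n E) (v : Fin (n + 2) → Phase n E),
      extDeriv (fun y (w : Fin (n + 1) → Phase n E) =>
        OmegaLD n (Fin.cons (chiVF n χ₂ y) w)) x v = 0) :
    (∀ m : Phase n E, lieBra (chiVF n χ₁) (chiVF n χ₂) m = 0)
    ∧ (∀ m : Phase n E, lieBra (xibar n ξ₁) (xibar n ξ₂) m = xibar n (lieBra ξ₁ ξ₂) m)
    ∧ (∀ m : Phase n E, lieBra (xibar n ξ) (chiVF n χ) m
        = ((0 : E),
            fderiv ℝ χ m.1 (ξ m.1) + liftActionAlt n (fderiv ℝ ξ m.1) (χ m.1))) := by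
  refine ⟨?_, ?_, ?_⟩
  · -- [χ₁, χ₂] = 0
    intro m
    simp only [lieBra]
    rw [fderiv_chiVF_apply n χ₂ hχ₂ m (chiVF n χ₁ m),
      fderiv_chiVF_apply n χ₁ hχ₁ m (chiVF n χ₂ m)]
    simp [chiVF, Prod.ext_iff]
  · -- [ξ̄₁, ξ̄₂] = lift of [ξ₁, ξ₂]
    intro m
    have hd2 : HasFDerivAt (fderiv ℝ ξ₂) (fderiv ℝ (fderiv ℝ ξ₂) m.1) m.1 :=
      (((hξ₂.fderiv_right (m := (⊤ : ℕ∞)) (by simp)).differentiable (by simp)) m.1).hasFDerivAt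
    have hd1 : HasFDerivAt (fderiv ℝ ξ₁) (fderiv ℝ (fderiv ℝ ξ₁) m.1) m.1 :=
      (((hξ₁.fderiv_right (m := (⊤ : ℕ∞)) (by simp)).differentiable (by simp)) m.1).hasFDerivAt
    have hv1 : HasFDerivAt ξ₁ (fderiv ℝ ξ₁ m.1) m.1 :=
      (hξ₁.differentiable (by simp) m.1).hasFDerivAt
    have hv2 : HasFDerivAt ξ₂ (fderiv ℝ ξ₂ m.1) m.1 :=
      (hξ₂.differentiable (by simp) m.1).hasFDerivAt
    have hK2 : HasFDerivAt (fun x => fderiv ℝ ξ₂ x (ξ₁ x))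
        ((fderiv ℝ ξ₂ m.1).comp (fderiv ℝ ξ₁ m.1)
          + (fderiv ℝ (fderiv ℝ ξ₂) m.1).flip (ξ₁ m.1)) m.1 := hd2.clm_apply hv1
    have hK1 : HasFDerivAt (fun x => fderiv ℝ ξ₁ x (ξ₂ x))
        ((fderiv ℝ ξ₁ m.1).comp (fderiv ℝ ξ₂ m.1)
          + (fderiv ℝ (fderiv ℝ ξ₁) m.1).flip (ξ₂ m.1)) m.1 := hd1.clm_apply hv2
    have hK : HasFDerivAt (lieBra ξ₁ ξ₂)
        (((fderiv ℝ ξ₂ m.1).comp (fderiv ℝ ξ₁ m.1)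
            + (fderiv ℝ (fderiv ℝ ξ₂) m.1).flip (ξ₁ m.1))
          - ((fderiv ℝ ξ₁ m.1).comp (fderiv ℝ ξ₂ m.1)
            + (fderiv ℝ (fderiv ℝ ξ₁) m.1).flip (ξ₂ m.1))) m.1 := hK2.sub hK1
    have hsym2 : (fderiv ℝ (fderiv ℝ ξ₂) m.1).flip (ξ₁ m.1)
        = fderiv ℝ (fderiv ℝ ξ₂) m.1 (ξ₁ m.1) := by
      refine ContinuousLinearMap.ext fun u => ?_
      rw [ContinuousLinearMap.flip_apply]
      exact second_derivative_symmetric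
        (fun y => (hξ₂.differentiable (by simp) y).hasFDerivAt) hd2 u (ξ₁ m.1)
    have hsym1 : (fderiv ℝ (fderiv ℝ ξ₁) m.1).flip (ξ₂ m.1)
        = fderiv ℝ (fderiv ℝ ξ₁) m.1 (ξ₂ m.1) := by
      refine ContinuousLinearMap.ext fun u => ?_
      rw [ContinuousLinearMap.flip_apply]
      exact second_derivative_symmetric
        (fun y => (hξ₁.differentiable (by simp) y).hasFDerivAt) hd1 u (ξ₂ m.1)
    simp only [lieBra]
    rw [fderiv_xibar_apply n ξ₂ hξ₂ m (xibar n ξ₁ m),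
      fderiv_xibar_apply n ξ₁ hξ₁ m (xibar n ξ₂ m)]
    have hx1fst : (xibar n ξ₁ m).1 = ξ₁ m.1 := rfl
    have hx2fst : (xibar n ξ₂ m).1 = ξ₂ m.1 := rfl
    refine Prod.ext ?_ (Subtype.ext ?_)
    · simp only [Prod.fst_sub, hx1fst, hx2fst]
      rfl
    · have hcm2 : Aexp n (fderiv ℝ ξ₂ m.1) (Aexp n (fderiv ℝ ξ₁ m.1)
            (m.2 : ContinuousMultilinearMap ℝ (fun _ : Fin (n+1) => E) ℝ))
          = Aexp n (fderiv ℝ ξ₁ m.1) (Aexp n (fderiv ℝ ξ₂ m.1)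
              (m.2 : ContinuousMultilinearMap ℝ (fun _ : Fin (n+1) => E) ℝ))
            + (Aexp n ((fderiv ℝ ξ₁ m.1).comp (fderiv ℝ ξ₂ m.1))
                (m.2 : ContinuousMultilinearMap ℝ (fun _ : Fin (n+1) => E) ℝ)
              - Aexp n ((fderiv ℝ ξ₂ m.1).comp (fderiv ℝ ξ₁ m.1))
                (m.2 : ContinuousMultilinearMap ℝ (fun _ : Fin (n+1) => E) ℝ)) := by
        have h := Aexp_comm n (fderiv ℝ ξ₁ m.1) (fderiv ℝ ξ₂ m.1)
          (m.2 : ContinuousMultilinearMap ℝ (fun _ : Fin (n+1) => E) ℝ)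
        rw [Aexp_sub_left, sub_eq_iff_eq_add'] at h
        rw [h]
      have hrhs := xibar_snd_coe n (lieBra ξ₁ ξ₂) m
      rw [hK.fderiv] at hrhs
      show (-(Aexp n (fderiv ℝ ξ₂ m.1)
              ((xibar n ξ₁ m).2 : ContinuousMultilinearMap ℝ (fun _ : Fin (n+1) => E) ℝ))
            - Aexp n (fderiv ℝ (fderiv ℝ ξ₂) m.1 ((xibar n ξ₁ m).1))
              (m.2 : ContinuousMultilinearMap ℝ (fun _ : Fin (n+1) => E) ℝ))
          - (-(Aexp n (fderiv ℝ ξ₁ m.1)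
              ((xibar n ξ₂ m).2 : ContinuousMultilinearMap ℝ (fun _ : Fin (n+1) => E) ℝ))
            - Aexp n (fderiv ℝ (fderiv ℝ ξ₁) m.1 ((xibar n ξ₂ m).1))
              (m.2 : ContinuousMultilinearMap ℝ (fun _ : Fin (n+1) => E) ℝ))
          = ((xibar n (lieBra ξ₁ ξ₂) m).2
            : ContinuousMultilinearMap ℝ (fun _ : Fin (n+1) => E) ℝ)
      rw [hrhs, xibar_snd_coe n ξ₁ m, xibar_snd_coe n ξ₂ m, hx1fst, hx2fst,
        Aexp_neg_right, Aexp_neg_right, Aexp_sub_left, Aexp_add_left, Aexp_add_left,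
        hsym2, hsym1, hcm2]
      abel
  · -- [ξ̄, χ]
    intro m
    simp only [lieBra]
    rw [fderiv_chiVF_apply n χ hχ m (xibar n ξ m),
      fderiv_xibar_apply n ξ hξ m (chiVF n χ m)]
    refine Prod.ext ?_ (Subtype.ext ?_)
    · show (0 : E) - fderiv ℝ ξ m.1 ((chiVF n χ m).1) = 0
      show (0 : E) - fderiv ℝ ξ m.1 0 = 0
      simp
    · show ((fderiv ℝ χ m.1 ((xibar n ξ m).1) : altSub (n+1) E)
            : ContinuousMultilinearMap ℝ (fun _ : Fin (n+1) => E) ℝ)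
          - (-(Aexp n (fderiv ℝ ξ m.1)
                (((chiVF n χ m).2 : ContinuousMultilinearMap ℝ (fun _ : Fin (n+1) => E) ℝ)))
            - Aexp n (fderiv ℝ (fderiv ℝ ξ) m.1 ((chiVF n χ m).1))
              (m.2 : ContinuousMultilinearMap ℝ (fun _ : Fin (n+1) => E) ℝ))
          = ((fderiv ℝ χ m.1 (ξ m.1) + liftActionAlt n (fderiv ℝ ξ m.1) (χ m.1) : altSub (n+1) E)
            : ContinuousMultilinearMap ℝ (fun _ : Fin (n+1) => E) ℝ)
      rw [liftActionAlt_eq]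
      show ((fderiv ℝ χ m.1 (ξ m.1) : altSub (n+1) E)
            : ContinuousMultilinearMap ℝ (fun _ : Fin (n+1) => E) ℝ)
          - (-(Aexp n (fderiv ℝ ξ m.1)
                ((χ m.1 : ContinuousMultilinearMap ℝ (fun _ : Fin (n+1) => E) ℝ)))
            - Aexp n (fderiv ℝ (fderiv ℝ ξ) m.1 (0 : E))
              (m.2 : ContinuousMultilinearMap ℝ (fun _ : Fin (n+1) => E) ℝ))
          = ((fderiv ℝ χ m.1 (ξ m.1) : altSub (n+1) E)
            : ContinuousMultilinearMap ℝ (fun _ : Fin (n+1) => E) ℝ)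
            + Aexp n (fderiv ℝ ξ m.1)
                ((χ m.1 : ContinuousMultilinearMap ℝ (fun _ : Fin (n+1) => E) ℝ))
      rw [map_zero, Aexp_zero_left]
      abel

end Stmt10
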